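/- In the low temperature regime with parameters k and c (for any fixed k, c > 0), there exist a constant C > 0 and L₀ such that for all integers L ≥ L₀, the total variation distance between the PCA stationary measure and the Ising Gibbs measure satisfies ‖π_PCA − π_G‖_TV ≤ C (L^{-(c/2 − 1)} + L^{-(2k − 2)}). -/

import Mathlib

open Real Filter MeasureTheory

noncomputable section

/-- A site of the 2d discrete torus `(ℤ/Lℤ)²`. -/
abbrev Site (L : ℕ) := ZMod L × ZMod L

/-- A spin configuration on the torus, `true = +1`, `false = -1`. -/
abbrev Cfg (L : ℕ) := Site L → Bool

/-- The real spin value of a Boolean spin. -/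
def spin (b : Bool) : ℝ := if b then 1 else -1

/-- The up neighbor. -/
def upN {L : ℕ} (x : Site L) : Site L := (x.1, x.2 + 1)
/-- The right neighbor. -/
def rtN {L : ℕ} (x : Site L) : Site L := (x.1 + 1, x.2)
/-- The down neighbor. -/
def dnN {L : ℕ} (x : Site L) : Site L := (x.1, x.2 - 1)
/-- The left neighbor. -/
def lfN {L : ℕ} (x : Site L) : Site L := (x.1 - 1, x.2)

/-- The pair Hamiltonian `H(σ,τ) = −∑_x [J σ_x (τ_{x^u} + τ_{x^r}) + q σ_x τ_x]`. -/
def pairH (L : ℕ) [NeZero L] (J q : ℝ) (σ τ : Cfg L) : ℝ :=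
  - ∑ x : Site L, (J * spin (σ x) * (spin (τ (upN x)) + spin (τ (rtN x)))
      + q * spin (σ x) * spin (τ x))

/-- The normalization `Z_σ = ∑_τ e^{−H(σ,τ)}`. -/
def Zconf (L : ℕ) [NeZero L] (J q : ℝ) (σ : Cfg L) : ℝ :=
  ∑ τ : Cfg L, Real.exp (-(pairH L J q σ τ))

/-- The PCA transition probabilities `P(σ,τ) = e^{−H(σ,τ)}/Z_σ`. -/
def Ptrans (L : ℕ) [NeZero L] (J q : ℝ) (σ τ : Cfg L) : ℝ :=
  Real.exp (-(pairH L J q σ τ)) / Zconf L J q σ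

/-- `Z_PCA = ∑_σ Z_σ`. -/
def Zpca (L : ℕ) [NeZero L] (J q : ℝ) : ℝ := ∑ σ : Cfg L, Zconf L J q σ

/-- The PCA stationary measure `π_PCA(σ) = Z_σ / Z_PCA`. -/
def piPCA (L : ℕ) [NeZero L] (J q : ℝ) (σ : Cfg L) : ℝ := Zconf L J q σ / Zpca L J q

/-- The Ising Hamiltonian `H_G(σ) = −J ∑_{(x,y)} σ_x σ_y`, the sum over (unordered)
nearest-neighbor pairs of the torus, each pair being counted once via its up/right bond. -/
def isingH (L : ℕ) [NeZero L] (J : ℝ) (σ : Cfg L) : ℝ :=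
  - J * ∑ x : Site L, spin (σ x) * (spin (σ (upN x)) + spin (σ (rtN x)))

/-- The Ising partition function. -/
def Zg (L : ℕ) [NeZero L] (J : ℝ) : ℝ := ∑ σ : Cfg L, Real.exp (-(isingH L J σ))

/-- The Ising Gibbs measure `π_G(σ) = e^{−H_G(σ)}/Z_G`. -/
def piG (L : ℕ) [NeZero L] (J : ℝ) (σ : Cfg L) : ℝ := Real.exp (-(isingH L J σ)) / Zg L J

/-- Total variation distance between two measures on configuration space. -/
def tv (L : ℕ) [NeZero L] (μ ν : Cfg L → ℝ) : ℝ := (1/2) * ∑ σ : Cfg L, |μ σ - ν σ|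

/-- The all-plus configuration. -/
def plusCfg (L : ℕ) : Cfg L := fun _ => true
/-- The all-minus configuration. -/
def minusCfg (L : ℕ) : Cfg L := fun _ => false

/-!
Summing out `τ` gives `Z_σ = ∏_y 2 cosh (J b_y(σ) + q)` with the bond sum
`b_y(σ) = σ_y (σ_{y^d} + σ_{y^l}) ∈ {-2, 0, 2}`, while `e^{-H_G(σ)} = ∏_y e^{J b_y(σ)}`.
Normalised so that both constant configurations have weight `1`, the Ising weight is dominated
site by site by the PCA weight, and the PCA weight by a weight `W` that charges `u ≈ 4 L^{-2k}`
for every disagreement `σ_{y^d} ≠ σ_{y^l}` and `v ≈ e^{-2q}` for every disagreement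
`σ_{y^d} ≠ σ_y`. Hence `‖π_PCA − π_G‖_TV ≤ ∑_σ W(σ) - 2`.

Along the anti-diagonals of the torus, `W` is a cyclic transfer-matrix product over `L` layers:
a layer pays `u` per domain wall and two consecutive layers pay `v` per site where they differ.
The vector equal to `1` on the two constant layers and `2` elsewhere is a super-eigenvector of
the transposed transfer matrix with eigenvalue `1 + v^L + 2ρ`, where `ρ = O(L u)` is the weight of
the nonconstant layers (bounded by the same argument inside a single layer). Therefore
`∑_σ W(σ) - 2 = O(L v^L + L ρ) = O(L^{1-2c} + L^{2-2k})`.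
-/

namespace PCAIsing

open Finset

section Transfer

variable {X : Type*}

def chainWeight (M : X → X → ℝ) (g : X → ℝ) {n : ℕ} (t : Fin (n + 1) → X) : ℝ :=
  (∏ j : Fin n, M (t j.castSucc) (t j.succ)) * g (t (Fin.last n))

theorem chainWeight_cons (M : X → X → ℝ) (g : X → ℝ) {n : ℕ} (s : X) (t : Fin (n + 1) → X) :
    chainWeight M g (Fin.cons s t : Fin (n + 2) → X) = M s (t 0) * chainWeight M g t := by
  simp only [chainWeight, Fin.prod_univ_succ, Fin.cons_zero, Fin.cons_succ, Fin.castSucc_zero,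
    ← Fin.succ_castSucc, ← Fin.succ_last]
  ring

theorem chainWeight_nonneg {M : X → X → ℝ} (hM : ∀ s s', 0 ≤ M s s') {g : X → ℝ}
    (hg : ∀ s, 0 ≤ g s) {n : ℕ} (t : Fin (n + 1) → X) : 0 ≤ chainWeight M g t :=
  mul_nonneg (prod_nonneg fun _ _ => hM _ _) (hg _)

theorem prod_cyclic_le_chainWeight {ω : X → ℝ} {V : X → X → ℝ} (hω : ∀ s, 0 ≤ ω s)
    (hV : ∀ s s', 0 ≤ V s s') (hV1 : ∀ s s', V s s' ≤ 1) {n : ℕ} (t : ZMod (n + 1) → X) :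
    ∏ i, ω (t i) * V (t i) (t (i + 1)) ≤ chainWeight (fun s s' => ω s * V s s') ω t := by
  -- `ZMod (n + 1)` is `Fin (n + 1)`; the cycle is opened by dropping the factor `V _ (t 0) ≤ 1`.
  change ∏ i : Fin (n + 1), ω (t i) * V (t i) (t (i + (1 : Fin (n + 1)))) ≤ _
  rw [Fin.prod_univ_castSucc]
  simp only [Fin.coeSucc_eq_succ]
  change _ ≤ (∏ j : Fin n, ω (t j.castSucc) * V (t j.castSucc) (t j.succ)) * ω (t (Fin.last n))
  exact mul_le_mul_of_nonneg_left (mul_le_of_le_one_right (hω _) (hV1 _ _))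
    (prod_nonneg fun _ _ => mul_nonneg (hω _) (hV _ _))

def groundPotential [DecidableEq X] (p m s : X) : ℝ := if s ∈ ({p, m} : Finset X) then 1 else 2

theorem one_le_groundPotential [DecidableEq X] (p m s : X) : 1 ≤ groundPotential p m s := by
  unfold groundPotential; split_ifs <;> norm_num

variable [Fintype X]

theorem sum_chainWeight_le_pow {M : X → X → ℝ} (hM : ∀ s s', 0 ≤ M s s') {κ g : X → ℝ}
    (hg : ∀ s, 0 ≤ g s) {r : ℝ} (hr : 0 ≤ r) (hκM : ∀ s', ∑ s, κ s * M s s' ≤ r * κ s') :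
    ∀ n : ℕ, ∑ t : Fin (n + 1) → X, κ (t 0) * chainWeight M g t ≤ r ^ n * ∑ s, κ s * g s
  | 0 => by
    simpa [chainWeight] using ((Equiv.funUnique (Fin 1) X).sum_comp (fun s => κ s * g s)).le
  | n + 1 => calc
      ∑ t : Fin (n + 2) → X, κ (t 0) * chainWeight M g t
        = ∑ t : Fin (n + 1) → X, (∑ s, κ s * M s (t 0)) * chainWeight M g t := by
          rw [← (Fin.consEquiv fun _ => X).sum_comp, Fintype.sum_prod_type, Finset.sum_comm]
          refine sum_congr rfl fun t _ => ?_
          rw [Finset.sum_mul]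
          refine sum_congr rfl fun s _ => ?_
          rw [show (Fin.consEquiv fun _ => X) (s, t) = Fin.cons s t from rfl, chainWeight_cons,
            Fin.cons_zero, mul_assoc]
      _ ≤ ∑ t : Fin (n + 1) → X, r * (κ (t 0) * chainWeight M g t) :=
          sum_le_sum fun t _ => by
            rw [← mul_assoc]
            exact mul_le_mul_of_nonneg_right (hκM (t 0)) (chainWeight_nonneg hM hg t)
      _ ≤ r ^ (n + 1) * ∑ s, κ s * g s := by
          rw [← Finset.mul_sum, pow_succ', mul_assoc]
          exact mul_le_mul_of_nonneg_left (sum_chainWeight_le_pow hM hg hr hκM n) hr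

variable [DecidableEq X]

theorem sum_groundPotential_mul {p m : X} (hpm : p ≠ m) (F : X → ℝ) :
    ∑ s, groundPotential p m s * F s = F p + F m + 2 * ∑ s ∈ ({p, m} : Finset X)ᶜ, F s := by
  rw [← sum_add_sum_compl {p, m}, sum_pair hpm, mul_sum]
  simp only [groundPotential, if_pos (mem_insert_self p {m}),
    if_pos (mem_insert_of_mem (mem_singleton_self m)), one_mul]
  congr 1
  exact sum_congr rfl fun s hs => by rw [if_neg (mem_compl.mp hs)]

theorem sum_groundPotential_mul_le {ω : X → ℝ} {V : X → X → ℝ} {w : ℝ} {p m : X} (hpm : p ≠ m)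
    (hω : ∀ s, 0 ≤ ω s) (hωp : ω p ≤ 1) (hωm : ω m ≤ 1) (hV : ∀ s s', 0 ≤ V s s')
    (hV1 : ∀ s s', V s s' ≤ 1) (hVpm : V p m ≤ w) (hVmp : V m p ≤ w) (s' : X) :
    ∑ s, groundPotential p m s * (ω s * V s s')
      ≤ (1 + w + 2 * ∑ s ∈ ({p, m} : Finset X)ᶜ, ω s) * groundPotential p m s' := by
  have hrest : ∑ s ∈ ({p, m} : Finset X)ᶜ, ω s * V s s' ≤ ∑ s ∈ ({p, m} : Finset X)ᶜ, ω s :=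
    sum_le_sum fun s _ => mul_le_of_le_one_right (hω s) (hV1 s s')
  have hρ : 0 ≤ ∑ s ∈ ({p, m} : Finset X)ᶜ, ω s := sum_nonneg fun s _ => hω s
  have hw : 0 ≤ w := (hV p m).trans hVpm
  have hp : ω p * V p s' ≤ 1 := mul_le_one₀ hωp (hV p s') (hV1 p s')
  have hm : ω m * V m s' ≤ 1 := mul_le_one₀ hωm (hV m s') (hV1 m s')
  rw [sum_groundPotential_mul hpm, groundPotential]
  split_ifs with hs'
  · rcases mem_insert.mp hs' with rfl | hs'
    · linarith [(mul_le_of_le_one_left (hV m s') hωm).trans hVmp]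
    · obtain rfl := mem_singleton.mp hs'
      linarith [(mul_le_of_le_one_left (hV p s') hωp).trans hVpm]
  · linarith

theorem sum_prod_cyclic_le {L : ℕ} [NeZero L] {ω : X → ℝ} {V : X → X → ℝ} {w : ℝ} {p m : X}
    (hpm : p ≠ m) (hω : ∀ s, 0 ≤ ω s) (hωp : ω p ≤ 1) (hωm : ω m ≤ 1)
    (hV : ∀ s s', 0 ≤ V s s') (hV1 : ∀ s s', V s s' ≤ 1) (hVpm : V p m ≤ w) (hVmp : V m p ≤ w) :
    ∑ t : ZMod L → X, ∏ i, ω (t i) * V (t i) (t (i + 1))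
      ≤ (1 + w + 2 * ∑ s ∈ ({p, m} : Finset X)ᶜ, ω s) ^ (L - 1)
        * (2 + 2 * ∑ s ∈ ({p, m} : Finset X)ᶜ, ω s) := by
  obtain ⟨n, rfl⟩ : ∃ n, L = n + 1 := Nat.exists_eq_add_one.mpr (Nat.pos_of_neZero L)
  have hM : ∀ s s', 0 ≤ ω s * V s s' := fun s s' => mul_nonneg (hω s) (hV s s')
  have hr : 0 ≤ 1 + w + 2 * ∑ s ∈ ({p, m} : Finset X)ᶜ, ω s := by
    linarith [(hV p m).trans hVpm, sum_nonneg fun s (_ : s ∈ ({p, m} : Finset X)ᶜ) => hω s]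
  calc ∑ t : ZMod (n + 1) → X, ∏ i, ω (t i) * V (t i) (t (i + 1))
      ≤ ∑ t : Fin (n + 1) → X,
          groundPotential p m (t 0) * chainWeight (fun s s' => ω s * V s s') ω t :=
        sum_le_sum fun t _ => (prod_cyclic_le_chainWeight hω hV hV1 t).trans
          (le_mul_of_one_le_left (chainWeight_nonneg hM hω t) (one_le_groundPotential p m _))
    _ ≤ (1 + w + 2 * ∑ s ∈ ({p, m} : Finset X)ᶜ, ω s) ^ n
          * ∑ s, groundPotential p m s * ω s :=
        sum_chainWeight_le_pow hM hω hr
          (sum_groundPotential_mul_le hpm hω hωp hωm hV hV1 hVpm hVmp) n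
    _ ≤ _ := by
        rw [sum_groundPotential_mul hpm, Nat.add_sub_cancel]
        gcongr
        linarith

end Transfer

theorem half_sum_abs_div_sub_div_le {ι : Type*} [Fintype ι] {f g : ι → ℝ} (hg : ∀ i, 0 ≤ g i)
    (hgf : ∀ i, g i ≤ f i) (hG : 0 < ∑ i, g i) :
    1 / 2 * ∑ i, |f i / ∑ j, f j - g i / ∑ j, g j| ≤ 1 - (∑ i, g i) / ∑ i, f i := by
  set F := ∑ i, f i
  set G := ∑ i, g i
  have hGF : G ≤ F := sum_le_sum fun i _ => hgf i
  have hF : 0 < F := hG.trans_le hGF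
  have hpt : ∀ i, |f i / F - g i / G| ≤ (f i - g i) / F + g i * ((F - G) / (F * G)) := by
    intro i
    have hsplit : f i / F - g i / G = (f i - g i) / F - g i * ((F - G) / (F * G)) := by
      field_simp; ring
    rw [hsplit]
    refine (abs_sub _ _).trans (le_of_eq ?_)
    rw [abs_of_nonneg (div_nonneg (sub_nonneg.2 (hgf i)) hF.le),
      abs_of_nonneg (mul_nonneg (hg i) (div_nonneg (sub_nonneg.2 hGF) (by positivity)))]
  calc 1 / 2 * ∑ i, |f i / F - g i / G|
      ≤ 1 / 2 * ∑ i, ((f i - g i) / F + g i * ((F - G) / (F * G))) := by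
        gcongr with i; exact hpt i
    _ = 1 - G / F := by
        rw [sum_add_distrib, ← sum_div, ← sum_mul, sum_sub_distrib]
        field_simp
        ring

theorem mul_div_sum_mul_left {ι : Type*} [Fintype ι] {c : ℝ} (hc : c ≠ 0) (f : ι → ℝ) (i : ι) :
    c * f i / ∑ j, c * f j = f i / ∑ j, f j := by
  rw [← mul_sum, mul_div_mul_left _ _ hc]

theorem one_add_pow_le_one_add_two_mul {y : ℝ} (hy : 0 ≤ y) {n : ℕ} (h : n * y ≤ 1) :
    (1 + y) ^ n ≤ 1 + 2 * n * y := by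
  have hexp : exp (n * y) - 1 ≤ 2 * (n * y) := by
    simpa [abs_of_nonneg (by positivity : 0 ≤ (n : ℝ) * y)] using
      (abs_le.1 (abs_exp_sub_one_le (x := n * y)
        (by rw [abs_of_nonneg (by positivity)]; exact h))).2
  calc (1 + y) ^ n ≤ exp y ^ n := by gcongr; linarith [add_one_le_exp y]
    _ = exp (n * y) := (exp_nat_mul y n).symm
    _ ≤ 1 + 2 * n * y := by linarith

theorem one_add_pow_mul_two_add_sub_two_le {w ρ : ℝ} (hw : 0 ≤ w) (hρ : 0 ≤ ρ) {n : ℕ} (hn : 1 ≤ n)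
    (h : n * (w + 2 * ρ) ≤ 1) :
    (1 + w + 2 * ρ) ^ (n - 1) * (2 + 2 * ρ) - 2 ≤ 4 * n * w + 14 * n * ρ := by
  have hn' : (1 : ℝ) ≤ n := by exact_mod_cast hn
  have hcast : ((n - 1 : ℕ) : ℝ) ≤ n := by exact_mod_cast Nat.sub_le n 1
  have hpow := one_add_pow_le_one_add_two_mul (y := w + 2 * ρ) (by positivity) (n := n - 1)
    ((mul_le_mul_of_nonneg_right hcast (by positivity)).trans h)
  rw [← add_assoc] at hpow
  have hpow' : (1 + w + 2 * ρ) ^ (n - 1) ≤ 1 + 2 * n * (w + 2 * ρ) :=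
    hpow.trans (by gcongr)
  nlinarith

theorem min_one_add_pow_le {a b : ℝ} (ha : 1 / 2 ≤ a) (hb : 0 ≤ b) {n : ℕ} (h : n * b ≤ 1 / 2) :
    min 1 (a + b) ^ n ≤ 3 * a ^ n := by
  have hpow := one_add_pow_le_one_add_two_mul (y := 2 * b) (by positivity) (n := n) (by linarith)
  calc min 1 (a + b) ^ n ≤ (a * (1 + 2 * b)) ^ n :=
        pow_le_pow_left₀ (le_min zero_le_one (by linarith))
          ((min_le_right _ _).trans (by nlinarith)) n
    _ = a ^ n * (1 + 2 * b) ^ n := mul_pow _ _ _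
    _ ≤ a ^ n * 3 := by gcongr; linarith
    _ = 3 * a ^ n := mul_comm _ _

theorem exp_neg_mul_cosh_add_le (x : ℝ) {d : ℝ} (hd : 0 ≤ d) :
    exp (-d) * cosh (x + d) ≤ cosh x := by
  rw [cosh_eq, cosh_eq, mul_div_assoc', mul_add, ← exp_add, ← exp_add]
  gcongr <;> linarith

theorem cosh_sub_le_mul_cosh_add (J q : ℝ) :
    cosh (q - 2 * J) ≤ (exp (-(2 * q)) + exp (-(4 * J))) * cosh (2 * J + q) := by
  have hexp₁ : exp (-(2 * q)) * exp (2 * J + q) = exp (-(q - 2 * J)) := by rw [← exp_add]; ring_nf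
  have hexp₂ : exp (-(4 * J)) * exp (2 * J + q) = exp (q - 2 * J) := by rw [← exp_add]; ring_nf
  rw [cosh_eq, cosh_eq]
  nlinarith [mul_pos (exp_pos (-(2 * q))) (exp_pos (-(2 * J + q))),
    mul_pos (exp_pos (-(4 * J))) (exp_pos (-(2 * J + q)))]

theorem cosh_le_two_mul_exp_mul_cosh {q : ℝ} (hq : 0 ≤ q) (J : ℝ) :
    cosh q ≤ 2 * exp (-(2 * J)) * cosh (2 * J + q) := by
  rw [cosh_eq, cosh_eq, mul_assoc, mul_div_assoc', mul_add, ← exp_add, ← exp_add]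
  have : exp (-q) ≤ exp q := exp_le_exp.2 (by linarith)
  have : 0 < exp (-(2 * J) + -(2 * J + q)) := exp_pos _
  rw [show -(2 * J) + (2 * J + q) = q by ring]
  linarith

theorem cosh_div_le_ite {J q u v : ℝ} (hu : 0 ≤ u) (hv1 : v ≤ 1)
    (hflip : cosh (q - 2 * J) ≤ v * cosh (2 * J + q)) (hmix : cosh q ≤ u * v * cosh (2 * J + q))
    (a b s : Bool) :
    cosh (J * (spin s * (spin a + spin b)) + q) / cosh (2 * J + q)
      ≤ (if a = b then 1 else u) * (if a = s then 1 else v) := by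
  have hc := cosh_pos (2 * J + q)
  have hmix' : cosh q ≤ u * cosh (2 * J + q) :=
    hmix.trans (by gcongr; exact mul_le_of_le_one_right hu hv1)
  rw [div_le_iff₀ hc]
  cases a <;> cases b <;> cases s <;> norm_num [spin] <;> ring_nf at hflip hmix hmix' ⊢ <;>
    first | exact le_rfl | assumption

theorem eventually_mul_rpow_le (a : ℝ) {e : ℝ} (he : e < 0) {ε : ℝ} (hε : 0 < ε) :
    ∀ᶠ L : ℕ in atTop, a * (L : ℝ) ^ e ≤ ε := by
  have h := ((tendsto_rpow_neg_atTop (neg_pos.2 he)).comp tendsto_natCast_atTop_atTop).const_mul a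
  rw [neg_neg, mul_zero] at h
  exact h.eventually_le_const hε

theorem eventually_mul_log_div_le (c : ℝ) {ε : ℝ} (hε : 0 < ε) :
    ∀ᶠ L : ℕ in atTop, c * log L / L ≤ ε := by
  have h := ((tendsto_pow_log_div_mul_add_atTop 1 0 1 one_ne_zero).comp
    tendsto_natCast_atTop_atTop).const_mul c
  simp only [pow_one, one_mul, add_zero, mul_zero] at h
  filter_upwards [h.eventually_le_const hε] with L hL
  simpa [mul_div_assoc] using hL

section Torus

variable {L : ℕ}

theorem spin_mul_self (b : Bool) : spin b * spin b = 1 := by cases b <;> norm_num [spin]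

def bond (σ : Cfg L) (y : Site L) : ℝ := spin (σ y) * (spin (σ (dnN y)) + spin (σ (lfN y)))

def localField (J q : ℝ) (σ : Cfg L) (y : Site L) : ℝ :=
  J * (spin (σ (dnN y)) + spin (σ (lfN y))) + q * spin (σ y)

theorem cosh_localField (J q : ℝ) (σ : Cfg L) (y : Site L) :
    cosh (localField J q σ y) = cosh (J * bond σ y + q) := by
  have h : J * bond σ y + q = spin (σ y) * localField J q σ y := by
    simp only [bond, localField]; linear_combination (-q) * spin_mul_self (σ y)
  rw [h]; cases σ y <;> simp [spin]

theorem bond_le_two (σ : Cfg L) (y : Site L) : bond σ y ≤ 2 := by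
  unfold bond; cases σ y <;> cases σ (dnN y) <;> cases σ (lfN y) <;> norm_num [spin]

theorem bond_const (b : Bool) (y : Site L) : bond (fun _ => b) y = 2 := by
  unfold bond; cases b <;> norm_num [spin]

theorem const_ne_const : (fun _ => true : ZMod L → Bool) ≠ fun _ => false :=
  fun h => by simpa using congrFun h 0

variable [NeZero L]

theorem sum_upN (g : Site L → Site L → ℝ) : ∑ x, g x (upN x) = ∑ y, g (dnN y) y :=
  Fintype.sum_equiv ⟨upN, dnN, fun x => by simp [upN, dnN], fun x => by simp [upN, dnN]⟩ _ _
    fun x => by simp [upN, dnN]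

theorem sum_rtN (g : Site L → Site L → ℝ) : ∑ x, g x (rtN x) = ∑ y, g (lfN y) y :=
  Fintype.sum_equiv ⟨rtN, lfN, fun x => by simp [rtN, lfN], fun x => by simp [rtN, lfN]⟩ _ _
    fun x => by simp [rtN, lfN]

theorem neg_isingH (J : ℝ) (σ : Cfg L) : -isingH L J σ = J * ∑ y, bond σ y := by
  have h := congrArg₂ (· + ·) (sum_upN fun x y => spin (σ x) * spin (σ y))
    (sum_rtN fun x y => spin (σ x) * spin (σ y))
  simp only [← sum_add_distrib] at h
  simp only [isingH, bond, neg_mul, neg_neg, mul_add, h]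
  congr 1
  exact sum_congr rfl fun y _ => by ring

theorem neg_pairH (J q : ℝ) (σ τ : Cfg L) :
    -pairH L J q σ τ = ∑ y, localField J q σ y * spin (τ y) := by
  have h := congrArg₂ (· + ·) (sum_upN fun x y => J * spin (σ x) * spin (τ y))
    (sum_rtN fun x y => J * spin (σ x) * spin (τ y))
  simp only [← sum_add_distrib] at h
  simp only [pairH, neg_neg, mul_add, add_mul, sum_add_distrib, h, localField]

theorem Zconf_eq_prod (J q : ℝ) (σ : Cfg L) :
    Zconf L J q σ = ∏ y, 2 * cosh (J * bond σ y + q) := by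
  simp only [Zconf, neg_pairH, exp_sum]
  rw [← Fintype.prod_sum (fun y b => exp (localField J q σ y * spin b))]
  refine prod_congr rfl fun y _ => ?_
  rw [Fintype.sum_bool, ← cosh_localField, cosh_eq]
  simp only [spin, if_true, Bool.false_eq_true, if_false, mul_one, mul_neg_one]
  ring

def pcaWeight (J q : ℝ) (σ : Cfg L) : ℝ := ∏ y, cosh (J * bond σ y + q) / cosh (2 * J + q)

def isingWeight (J : ℝ) (σ : Cfg L) : ℝ := ∏ y, exp (J * (bond σ y - 2))

theorem Zconf_eq_mul_pcaWeight (J q : ℝ) (σ : Cfg L) :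
    Zconf L J q σ = (2 * cosh (2 * J + q)) ^ Fintype.card (Site L) * pcaWeight J q σ := by
  rw [Zconf_eq_prod, pcaWeight, ← card_univ, ← prod_const, ← prod_mul_distrib]
  exact prod_congr rfl fun y _ => by field_simp

theorem exp_neg_isingH_eq (J : ℝ) (σ : Cfg L) :
    exp (-isingH L J σ) = exp (2 * J) ^ Fintype.card (Site L) * isingWeight J σ := by
  rw [neg_isingH, mul_sum, exp_sum, isingWeight, ← card_univ, ← prod_const, ← prod_mul_distrib]
  exact prod_congr rfl fun y _ => by rw [← exp_add]; ring_nf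

theorem piPCA_eq (J q : ℝ) (σ : Cfg L) :
    piPCA L J q σ = pcaWeight J q σ / ∑ σ' : Cfg L, pcaWeight J q σ' := by
  simp only [piPCA, Zpca, Zconf_eq_mul_pcaWeight]
  exact mul_div_sum_mul_left (pow_ne_zero _ (by positivity)) _ σ

theorem piG_eq (J : ℝ) (σ : Cfg L) :
    piG L J σ = isingWeight J σ / ∑ σ' : Cfg L, isingWeight J σ' := by
  simp only [piG, Zg, exp_neg_isingH_eq]
  exact mul_div_sum_mul_left (pow_ne_zero _ (by positivity)) _ σ

theorem isingWeight_le_pcaWeight {J : ℝ} (hJ : 0 ≤ J) (q : ℝ) (σ : Cfg L) :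
    isingWeight J σ ≤ pcaWeight J q σ :=
  prod_le_prod (fun _ _ => (exp_pos _).le) fun y _ => by
    rw [le_div_iff₀ (cosh_pos _)]
    have h := exp_neg_mul_cosh_add_le (J * bond σ y + q)
      (mul_nonneg hJ (sub_nonneg.2 (bond_le_two σ y)))
    rwa [show J * bond σ y + q + J * (2 - bond σ y) = 2 * J + q by ring, neg_mul_eq_mul_neg,
      neg_sub] at h

theorem isingWeight_const (J : ℝ) (b : Bool) : isingWeight J (fun _ : Site L => b) = 1 := by
  simp [isingWeight, bond_const]

theorem two_le_sum_isingWeight (J : ℝ) : 2 ≤ ∑ σ : Cfg L, isingWeight J σ := by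
  have hne : plusCfg L ≠ minusCfg L := fun h => by simpa [plusCfg, minusCfg] using congrFun h 0
  calc (2 : ℝ) = ∑ σ ∈ {plusCfg L, minusCfg L}, isingWeight J σ := by
        rw [sum_pair hne, show isingWeight J (plusCfg L) = 1 from isingWeight_const J true,
          show isingWeight J (minusCfg L) = 1 from isingWeight_const J false]; norm_num
    _ ≤ ∑ σ : Cfg L, isingWeight J σ :=
        sum_le_sum_of_subset_of_nonneg (subset_univ _) fun _ _ _ =>
          prod_nonneg fun _ _ => (exp_pos _).le

theorem tv_le_one_sub_div {J : ℝ} (hJ : 0 ≤ J) (q : ℝ) :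
    tv L (piPCA L J q) (piG L J)
      ≤ 1 - (∑ σ : Cfg L, isingWeight J σ) / ∑ σ : Cfg L, pcaWeight J q σ := by
  simp only [tv, piPCA_eq, piG_eq]
  exact half_sum_abs_div_sub_div_le (fun σ => prod_nonneg fun _ _ => (exp_pos _).le)
    (isingWeight_le_pcaWeight hJ q) (by linarith [two_le_sum_isingWeight (L := L) J])

theorem tv_le_one {J : ℝ} (hJ : 0 ≤ J) (q : ℝ) : tv L (piPCA L J q) (piG L J) ≤ 1 := by
  refine (tv_le_one_sub_div hJ q).trans (sub_le_self _ (div_nonneg ?_ ?_)) <;>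
    exact sum_nonneg fun σ _ => prod_nonneg fun _ _ => by positivity

def boundWeight (u v : ℝ) (σ : Cfg L) : ℝ :=
  ∏ y, (if σ (dnN y) = σ (lfN y) then 1 else u) * (if σ (dnN y) = σ y then 1 else v)

theorem pcaWeight_le_boundWeight {J q u v : ℝ} (hu : 0 ≤ u) (hv1 : v ≤ 1)
    (hflip : cosh (q - 2 * J) ≤ v * cosh (2 * J + q)) (hmix : cosh q ≤ u * v * cosh (2 * J + q))
    (σ : Cfg L) : pcaWeight J q σ ≤ boundWeight u v σ :=
  prod_le_prod (fun _ _ => by positivity) fun y _ =>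
    cosh_div_le_ite hu hv1 hflip hmix (σ (dnN y)) (σ (lfN y)) (σ y)

theorem tv_le_sum_boundWeight_sub_two {J q u v : ℝ} (hJ : 0 ≤ J) (hu : 0 ≤ u) (hv1 : v ≤ 1)
    (hflip : cosh (q - 2 * J) ≤ v * cosh (2 * J + q)) (hmix : cosh q ≤ u * v * cosh (2 * J + q)) :
    tv L (piPCA L J q) (piG L J) ≤ ∑ σ : Cfg L, boundWeight u v σ - 2 := by
  set F := ∑ σ : Cfg L, pcaWeight J q σ
  set G := ∑ σ : Cfg L, isingWeight J σ
  have hG : 2 ≤ G := two_le_sum_isingWeight J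
  have hGF : G ≤ F := sum_le_sum fun σ _ => isingWeight_le_pcaWeight hJ q σ
  have hF : F ≤ ∑ σ : Cfg L, boundWeight u v σ :=
    sum_le_sum fun σ _ => pcaWeight_le_boundWeight hu hv1 hflip hmix σ
  calc tv L (piPCA L J q) (piG L J) ≤ 1 - G / F := tv_le_one_sub_div hJ q
    _ = (F - G) / F := one_sub_div (by linarith : 0 < F).ne'
    _ ≤ F - G := div_le_self (by linarith) (by linarith)
    _ ≤ ∑ σ : Cfg L, boundWeight u v σ - 2 := by linarith

def layerWeight (u : ℝ) (s : ZMod L → Bool) : ℝ := ∏ i, if s i = s (i + 1) then 1 else u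

def layerOverlap (v : ℝ) (s s' : ZMod L → Bool) : ℝ := ∏ i, if s i = s' i then 1 else v

/-- Layer `m` is the anti-diagonal `{(-i, m + i)}`, so that the down and left neighbours of the
`i`-th site of layer `m + 1` are the `i`-th and `(i + 1)`-st sites of layer `m`. -/
def diagonals : Cfg L ≃ (ZMod L → ZMod L → Bool) where
  toFun σ m i := σ (-i, m + i)
  invFun t y := t (y.1 + y.2) (-y.1)
  left_inv σ := by funext y; simp
  right_inv t := by funext m i; simp

theorem boundWeight_eq (u v : ℝ) (σ : Cfg L) :
    boundWeight u v σ = ∏ m, layerWeight u (diagonals σ m)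
      * layerOverlap v (diagonals σ m) (diagonals σ (m + 1)) := by
  let e : ZMod L × ZMod L ≃ Site L :=
    ⟨fun p => (-p.2, p.1 + 1 + p.2), fun y => (y.2 + y.1 - 1, -y.1),
      fun p => by ext <;> simp, fun y => by ext <;> simp⟩
  have hdn : ∀ m i : ZMod L, dnN ((-i, m + 1 + i) : Site L) = (-i, m + i) := fun m i => by
    simp only [dnN, Prod.mk.injEq, true_and]; ring
  have hlf : ∀ m i : ZMod L, lfN ((-i, m + 1 + i) : Site L) = (-(i + 1), m + (i + 1)) :=
    fun m i => by simp only [lfN, Prod.mk.injEq]; constructor <;> ring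
  rw [boundWeight, ← e.prod_comp, Fintype.prod_prod_type]
  refine prod_congr rfl fun m _ => ?_
  rw [layerWeight, layerOverlap, ← prod_mul_distrib]
  refine prod_congr rfl fun i _ => ?_
  simp only [e, Equiv.coe_fn_mk, diagonals, hdn, hlf]
  rfl

def constLayers : Finset (ZMod L → Bool) := {fun _ => true, fun _ => false}

def nonconstWeight (u : ℝ) : ℝ := ∑ s ∈ (constLayers : Finset (ZMod L → Bool))ᶜ, layerWeight u s

theorem layerWeight_nonneg {u : ℝ} (hu : 0 ≤ u) (s : ZMod L → Bool) : 0 ≤ layerWeight u s :=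
  prod_nonneg fun _ _ => by split_ifs <;> norm_num [hu]

theorem layerWeight_const (u : ℝ) (b : Bool) : layerWeight u (fun _ : ZMod L => b) = 1 := by
  simp [layerWeight]

theorem layerOverlap_nonneg {v : ℝ} (hv : 0 ≤ v) (s s' : ZMod L → Bool) :
    0 ≤ layerOverlap v s s' :=
  prod_nonneg fun _ _ => by split_ifs <;> norm_num [hv]

theorem layerOverlap_le_one {v : ℝ} (hv : 0 ≤ v) (hv1 : v ≤ 1) (s s' : ZMod L → Bool) :
    layerOverlap v s s' ≤ 1 :=
  prod_le_one (fun _ _ => by split_ifs <;> norm_num [hv]) fun _ _ => by split_ifs <;> norm_num [hv1]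

theorem layerOverlap_const_of_ne (v : ℝ) {b b' : Bool} (h : b ≠ b') :
    layerOverlap v (fun _ : ZMod L => b) (fun _ => b') = v ^ L := by
  simp [layerOverlap, h]

theorem sum_boundWeight_le {u v : ℝ} (hu : 0 ≤ u) (hv : 0 ≤ v) (hv1 : v ≤ 1) :
    ∑ σ : Cfg L, boundWeight u v σ
      ≤ (1 + v ^ L + 2 * nonconstWeight (L := L) u) ^ (L - 1)
        * (2 + 2 * nonconstWeight (L := L) u) := by
  simp only [boundWeight_eq]
  rw [diagonals.sum_comp (fun t => ∏ m, layerWeight u (t m) * layerOverlap v (t m) (t (m + 1)))]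
  exact sum_prod_cyclic_le const_ne_const (layerWeight_nonneg hu) (layerWeight_const u true).le
    (layerWeight_const u false).le (layerOverlap_nonneg hv) (layerOverlap_le_one hv hv1)
    (layerOverlap_const_of_ne v (by decide)).le (layerOverlap_const_of_ne v (by decide)).le

theorem nonconstWeight_le {u : ℝ} (hu : 0 ≤ u) (hu1 : u ≤ 1) :
    nonconstWeight (L := L) u ≤ 2 * (1 + u) ^ (L - 1) - 2 := by
  have hsum : ∑ s : ZMod L → Bool, layerWeight u s = 2 + nonconstWeight (L := L) u := by
    rw [← sum_add_sum_compl constLayers, constLayers, sum_pair const_ne_const, layerWeight_const,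
      layerWeight_const, nonconstWeight, constLayers]
    norm_num
  have hcyc := sum_prod_cyclic_le (L := L) (ω := fun _ => (1 : ℝ))
    (V := fun b b' => if b = b' then 1 else u) (w := u) (p := true) (m := false) (by decide)
    (fun _ => zero_le_one) le_rfl le_rfl (fun _ _ => by split_ifs <;> norm_num [hu])
    (fun _ _ => by split_ifs <;> norm_num [hu1]) (by simp) (by simp)
  simp only [one_mul, ← Fintype.univ_bool, compl_univ, sum_empty, mul_zero, add_zero] at hcyc
  change ∑ s : ZMod L → Bool, layerWeight u s ≤ _ at hcyc
  linarith

theorem nonconstWeight_le_four_mul {u : ℝ} (hu : 0 ≤ u) (h : L * u ≤ 1) :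
    nonconstWeight (L := L) u ≤ 4 * L * u := by
  have hL : (1 : ℝ) ≤ L := by exact_mod_cast Nat.one_le_iff_ne_zero.2 (NeZero.ne L)
  have hcast : ((L - 1 : ℕ) : ℝ) ≤ L := by exact_mod_cast Nat.sub_le L 1
  have hpow := one_add_pow_le_one_add_two_mul hu (n := L - 1)
    ((mul_le_mul_of_nonneg_right hcast hu).trans h)
  have := nonconstWeight_le (L := L) hu (by nlinarith)
  nlinarith

theorem tv_le_of_small {J q : ℝ} (hJ : 0 ≤ J) (hq : 0 ≤ q) (hq4 : q ≤ 1 / 4)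
    (hq_small : 6 * L * exp (-(2 * q * L)) ≤ 1) (hJ_small : 64 * L ^ 2 * exp (-(2 * J)) ≤ 1) :
    tv L (piPCA L J q) (piG L J) ≤ 12 * L * exp (-(2 * q * L)) + 224 * L ^ 2 * exp (-(2 * J)) := by
  set u := 4 * exp (-(2 * J))
  -- The cap at `1` keeps every layer overlap at most `1`.
  set v := min 1 (exp (-(2 * q)) + exp (-(4 * J)))
  set ρ := nonconstWeight (L := L) u
  have hL : (1 : ℝ) ≤ L := by exact_mod_cast Nat.one_le_iff_ne_zero.2 (NeZero.ne L)
  have ha : 1 / 2 ≤ exp (-(2 * q)) := by linarith [add_one_le_exp (-(2 * q))]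
  have hb : exp (-(4 * J)) ≤ exp (-(2 * J)) := exp_le_exp.2 (by linarith)
  have hv : 1 / 2 ≤ v := le_min (by norm_num) (by linarith [exp_pos (-(4 * J))])
  have hv1 : v ≤ 1 := min_le_left _ _
  have hu : 0 ≤ u := by positivity
  have hflip : cosh (q - 2 * J) ≤ v * cosh (2 * J + q) := by
    rw [min_mul_of_nonneg _ _ (cosh_pos _).le, one_mul]
    refine le_min (cosh_le_cosh.2 ?_) (cosh_sub_le_mul_cosh_add J q)
    rw [abs_of_nonneg (by linarith : 0 ≤ 2 * J + q)]
    exact abs_le.2 ⟨by linarith, by linarith⟩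
  have hmix : cosh q ≤ u * v * cosh (2 * J + q) :=
    (cosh_le_two_mul_exp_mul_cosh hq J).trans <| mul_le_mul_of_nonneg_right
      (by nlinarith [exp_pos (-(2 * J))]) (cosh_pos _).le
  have hρ : ρ ≤ 4 * L * u := nonconstWeight_le_four_mul hu (by nlinarith [exp_pos (-(2 * J))])
  have hρ0 : 0 ≤ ρ := sum_nonneg fun s _ => layerWeight_nonneg hu s
  have hvL : v ^ L ≤ 3 * exp (-(2 * q * L)) := by
    rw [show -(2 * q * L) = L * -(2 * q) by ring, exp_nat_mul]
    exact min_one_add_pow_le ha (exp_pos _).le (by nlinarith [exp_pos (-(2 * J))])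
  have hsmall : L * (v ^ L + 2 * ρ) ≤ 1 := by nlinarith [exp_pos (-(2 * J))]
  calc tv L (piPCA L J q) (piG L J) ≤ ∑ σ : Cfg L, boundWeight u v σ - 2 :=
        tv_le_sum_boundWeight_sub_two hJ hu hv1 hflip hmix
    _ ≤ (1 + v ^ L + 2 * ρ) ^ (L - 1) * (2 + 2 * ρ) - 2 := by
        linarith [sum_boundWeight_le (L := L) hu (by linarith) hv1]
    _ ≤ 4 * L * v ^ L + 14 * L * ρ :=
        one_add_pow_mul_two_add_sub_two_le (by positivity) hρ0
          (Nat.one_le_iff_ne_zero.2 (NeZero.ne L)) hsmall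
    _ ≤ 12 * L * exp (-(2 * q * L)) + 224 * L ^ 2 * exp (-(2 * J)) := by nlinarith

theorem tv_le_rpow_of_large {k c : ℝ} (hk : 1 < k) (hc : 2 < c) (hL : 2 ≤ L)
    (hq : c * log L / L ≤ 1 / 4) (hc_small : 6 * (L : ℝ) ^ (1 - 2 * c) ≤ 1)
    (hk_small : 64 * (L : ℝ) ^ (2 - 2 * k) ≤ 1) :
    tv L (piPCA L (k * log L) (c * log L / L)) (piG L (k * log L))
      ≤ 224 * ((L : ℝ) ^ (-(c / 2 - 1)) + (L : ℝ) ^ (-(2 * k - 2))) := by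
  have hL1 : (1 : ℝ) < L := by exact_mod_cast hL
  have hL0 : (0 : ℝ) < L := by linarith
  have hlog : 0 < log L := log_pos hL1
  have hrpow : ∀ a : ℝ, exp (-(a * log L)) = (L : ℝ) ^ (-a) := fun a => by
    rw [rpow_def_of_pos hL0]; ring_nf
  have hqL : c * log L / L * L = c * log L := div_mul_cancel₀ _ hL0.ne'
  have hc_rpow : (L : ℝ) * exp (-(2 * (c * log L / L) * L)) = (L : ℝ) ^ (1 - 2 * c) := by
    rw [mul_assoc, hqL, ← mul_assoc, hrpow, sub_eq_add_neg, rpow_add hL0, rpow_one]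
  have hk_rpow : (L : ℝ) ^ 2 * exp (-(2 * (k * log L))) = (L : ℝ) ^ (2 - 2 * k) := by
    rw [← mul_assoc, hrpow, sub_eq_add_neg, rpow_add hL0, ← rpow_natCast]; norm_num
  have h := tv_le_of_small (mul_nonneg (by linarith : (0 : ℝ) ≤ k) hlog.le)
    (div_nonneg (mul_nonneg (by linarith : (0 : ℝ) ≤ c) hlog.le) hL0.le) hq
    (by rw [mul_assoc, hc_rpow]; exact hc_small) (by rw [mul_assoc, hk_rpow]; exact hk_small)
  rw [mul_assoc, hc_rpow, mul_assoc, hk_rpow] at h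
  have h1 : (L : ℝ) ^ (1 - 2 * c) ≤ (L : ℝ) ^ (-(c / 2 - 1)) :=
    rpow_le_rpow_of_exponent_le hL1.le (by linarith)
  rw [show -(2 * k - 2) = 2 - 2 * k by ring]
  nlinarith [rpow_nonneg hL0.le (1 - 2 * c)]

end Torus

end PCAIsing

theorem stmt0 (k c : ℝ) (hk : 0 < k) :
    ∃ C > (0:ℝ), ∃ L₀ : ℕ, ∀ L : ℕ, L₀ ≤ L → ∀ (h2 : 2 ≤ L),
      haveI : NeZero L := ⟨by omega⟩
      tv L (piPCA L (k * Real.log L) (c * Real.log L / L)) (piG L (k * Real.log L))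
        ≤ C * ((L : ℝ) ^ (-(c / 2 - 1)) + (L : ℝ) ^ (-(2 * k - 2))) := by
  by_cases hkc : 1 < k ∧ 2 < c
  · obtain ⟨hk1, hc2⟩ := hkc
    obtain ⟨L₀, hL₀⟩ := eventually_atTop.1
      ((PCAIsing.eventually_mul_log_div_le c (by norm_num : (0 : ℝ) < 1 / 4)).and
        ((PCAIsing.eventually_mul_rpow_le 6 (e := 1 - 2 * c) (by linarith) one_pos).and
          (PCAIsing.eventually_mul_rpow_le 64 (e := 2 - 2 * k) (by linarith) one_pos)))
    refine ⟨224, by norm_num, L₀, fun L hL h2 => ?_⟩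
    have : NeZero L := ⟨by omega⟩
    obtain ⟨hq, hc_small, hk_small⟩ := hL₀ L hL
    exact PCAIsing.tv_le_rpow_of_large hk1 hc2 h2 hq hc_small hk_small
  · refine ⟨1, one_pos, 0, fun L _ h2 => ?_⟩
    have : NeZero L := ⟨by omega⟩
    have hL : (1 : ℝ) ≤ L := by exact_mod_cast (by omega : 1 ≤ L)
    refine (PCAIsing.tv_le_one (mul_nonneg hk.le (log_nonneg hL)) _).trans ?_
    have ha := rpow_nonneg (zero_le_one.trans hL) (-(c / 2 - 1))
    have hb := rpow_nonneg (zero_le_one.trans hL) (-(2 * k - 2))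
    rcases not_and_or.1 hkc with hk1 | hc2
    · linarith [one_le_rpow hL (by linarith : 0 ≤ -(2 * k - 2))]
    · linarith [one_le_rpow hL (by linarith : 0 ≤ -(c / 2 - 1))]
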